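/- arXiv:math/0002021 — 6 statements merged into one kernel-verified Lean document; each statement's English description precedes it below -/
import Mathlib

section
/- Let G be a finite simple graph with vertex set V, let γ ∈ Γ(G), and for each vertex v let l(v,γ) denote the length of the orbit of v under the cyclic group generated by γ; note that γ^{l(v,γ)} fixes v and hence permutes N(v). Let S be a complete set of representatives of the orbits of γ acting on V. Then |F(γ)| = Π_{v ∈ S} |F_v(γ^{l(v,γ)})|, where for a graph automorphism τ fixing v, F_v(τ) denotes the set of permutations σ of N(v) that are a single cycle on all of N(v) and satisfy τ ∘ σ ∘ τ⁻¹ = σ on N(v). -/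
/-- A rotation system for a simple graph `G`. -/
def IsRotationSystem {V : Type*} (G : SimpleGraph V) (ρ : V → Equiv.Perm V) : Prop :=
  ∀ v : V, (ρ v).IsCycleOn (G.neighborSet v) ∧ ∀ w : V, w ∉ G.neighborSet v → ρ v w = w

/-- The action of a permutation `γ` on rotation systems: `(γ·ρ)_{γ(v)} = γ ∘ ρ_v ∘ γ⁻¹`. -/
def rotAct {V : Type*} (γ : Equiv.Perm V) (ρ : V → Equiv.Perm V) : V → Equiv.Perm V :=
  fun w => γ * ρ (γ⁻¹ w) * γ⁻¹

/-- The automorphism group `Γ(G)` of a simple graph, as a set of permutations. -/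
def autSet {V : Type*} (G : SimpleGraph V) : Set (Equiv.Perm V) :=
  {γ | ∀ u w : V, G.Adj (γ u) (γ w) ↔ G.Adj u w}

/-- `l(v,γ)`: the length of the orbit of the vertex `v` under the cyclic group generated
by `γ`. -/
noncomputable def orbitLen {V : Type*} (γ : Equiv.Perm V) (v : V) : ℕ :=
  ({w | ∃ k : ℕ, (γ ^ k) v = w}).ncard

/-- `F_v(τ)`: the set of rotations at `v` (permutations fixing every non-neighbor of `v` and
forming a single cycle on all of `N(v)`) which are fixed by `τ` under conjugation. -/
def fixedAt {V : Type*} (G : SimpleGraph V) (v : V) (τ : Equiv.Perm V) : Set (Equiv.Perm V) :=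
  {σ | σ.IsCycleOn (G.neighborSet v) ∧ (∀ w : V, w ∉ G.neighborSet v → σ w = w) ∧
    τ * σ * τ⁻¹ = σ}

section Aux

variable {V : Type*}

lemma autSet_pow {G : SimpleGraph V} {γ : Equiv.Perm V} (hγ : γ ∈ autSet G) (k : ℕ) :
    γ ^ k ∈ autSet G := by
  induction k with
  | zero => intro u w; simp
  | succ n ih =>
    intro u w
    have h : ∀ x, (γ ^ (n + 1)) x = (γ ^ n) (γ x) := by
      intro x; rw [pow_succ, Equiv.Perm.mul_apply]
    rw [h, h, ih (γ u) (γ w), hγ u w]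

lemma autSet_neighbor {G : SimpleGraph V} {τ : Equiv.Perm V} (hτ : τ ∈ autSet G) (v : V) :
    G.neighborSet (τ v) = τ '' G.neighborSet v := by
  ext w
  simp only [SimpleGraph.mem_neighborSet, Set.mem_image]
  constructor
  · intro h
    exact ⟨τ⁻¹ w, (hτ v (τ⁻¹ w)).1 (by simpa using h), by simp⟩
  · rintro ⟨x, hx, rfl⟩
    exact (hτ v x).2 hx

lemma isCycleOn_conj {s : Set V} {σ : Equiv.Perm V} (h : σ.IsCycleOn s) (τ : Equiv.Perm V) :
    (τ * σ * τ⁻¹).IsCycleOn (τ '' s) := by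
  constructor
  · have h1 : Set.BijOn τ s (τ '' s) := τ.injective.injOn.bijOn_image
    have h2 : Set.BijOn (⇑τ⁻¹) (τ '' s) s := by
      have h3 := (τ⁻¹ : Equiv.Perm V).injective.injOn.bijOn_image (s := τ '' s)
      rwa [Set.image_image, show (fun x => τ⁻¹ (τ x)) = id from funext fun x => by simp,
        Set.image_id] at h3
    have hcoe : ⇑(τ * σ * τ⁻¹) = ⇑τ ∘ ⇑σ ∘ ⇑τ⁻¹ := by
      funext x; simp [Equiv.Perm.mul_apply, Function.comp]
    rw [hcoe]
    exact h1.comp (h.1.comp h2)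
  · rintro _ ⟨x, hx, rfl⟩ _ ⟨y, hy, rfl⟩
    obtain ⟨n, hn⟩ := h.2 hx hy
    exact ⟨n, by rw [conj_zpow]; simp [Equiv.Perm.mul_apply, hn]⟩

lemma perm_pow_minimalPeriod_apply [Finite V] (γ : Equiv.Perm V) (v : V) :
    (γ ^ Function.minimalPeriod ⇑γ v) v = v := by
  have h : (⇑γ)^[Function.minimalPeriod ⇑γ v] v = v :=
    Function.isPeriodicPt_minimalPeriod ⇑γ v
  rwa [Equiv.Perm.iterate_eq_pow] at h

lemma minimalPeriod_dvd_of_fix {γ : Equiv.Perm V} {v : V} {k : ℕ}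
    (h : (γ ^ k) v = v) : Function.minimalPeriod ⇑γ v ∣ k :=
  Function.IsPeriodicPt.minimalPeriod_dvd
    (by rwa [Function.IsPeriodicPt, Function.IsFixedPt, Equiv.Perm.iterate_eq_pow])

lemma orbitLen_eq_minimalPeriod [Finite V] (γ : Equiv.Perm V) (v : V) :
    orbitLen γ v = Function.minimalPeriod ⇑γ v := by
  have hper : v ∈ Function.periodicPts ⇑γ := by
    refine ⟨orderOf γ, orderOf_pos γ, ?_⟩
    rw [Function.IsPeriodicPt, Function.IsFixedPt, Equiv.Perm.iterate_eq_pow,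
      pow_orderOf_eq_one]
    rfl
  have hm := Function.minimalPeriod_pos_of_mem_periodicPts hper
  set m := Function.minimalPeriod ⇑γ v with hmdef
  have hset : {w | ∃ k : ℕ, (γ ^ k) v = w} = (fun k => (⇑γ)^[k] v) '' Set.Iio m := by
    ext w
    simp only [Set.mem_setOf_eq, Set.mem_image, Set.mem_Iio]
    constructor
    · rintro ⟨j, rfl⟩
      exact ⟨j % m, Nat.mod_lt _ hm, by
        rw [hmdef, Function.iterate_mod_minimalPeriod_eq, Equiv.Perm.iterate_eq_pow]⟩
    · rintro ⟨j, _, rfl⟩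
      exact ⟨j, by rw [Equiv.Perm.iterate_eq_pow]⟩
  rw [orbitLen, hset,
    Set.ncard_image_of_injOn Function.iterate_injOn_Iio_minimalPeriod,
    ← Finset.coe_range, Set.ncard_coe_finset, Finset.card_range]

lemma conj_pow_eq {γ σ : Equiv.Perm V} {v : V}
    (hcomm : Commute (γ ^ Function.minimalPeriod ⇑γ v) σ)
    {a b : ℕ} (hab : (γ ^ a) v = (γ ^ b) v) :
    γ ^ a * σ * (γ ^ a)⁻¹ = γ ^ b * σ * (γ ^ b)⁻¹ := by
  wlog hba : b ≤ a generalizing a b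
  · exact (this hab.symm (le_of_not_ge hba)).symm
  have hfix : (γ ^ (a - b)) v = v := by
    have h1 : (γ ^ b) ((γ ^ (a - b)) v) = (γ ^ b) v := by
      rw [← Equiv.Perm.mul_apply, ← pow_add, Nat.add_sub_cancel' hba]
      exact hab
    exact (γ ^ b).injective h1
  obtain ⟨c, hc⟩ := minimalPeriod_dvd_of_fix hfix
  have hcom2 : Commute (γ ^ (a - b)) σ := by
    rw [hc, pow_mul]; exact hcomm.pow_left c
  have hsplit : γ ^ a = γ ^ (a - b) * γ ^ b := by
    rw [← pow_add, Nat.sub_add_cancel hba]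
  have hct : Commute (γ ^ (a - b)) (γ ^ b * σ * (γ ^ b)⁻¹) :=
    ((Commute.pow_pow_self γ (a - b) b).mul_right hcom2).mul_right
      (Commute.pow_pow_self γ (a - b) b).inv_right
  rw [hsplit]
  calc γ ^ (a - b) * γ ^ b * σ * (γ ^ (a - b) * γ ^ b)⁻¹
      = γ ^ (a - b) * (γ ^ b * σ * (γ ^ b)⁻¹) * (γ ^ (a - b))⁻¹ := by
        rw [mul_inv_rev]; group
    _ = γ ^ b * σ * (γ ^ b)⁻¹ * γ ^ (a - b) * (γ ^ (a - b))⁻¹ := by rw [hct.eq]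
    _ = γ ^ b * σ * (γ ^ b)⁻¹ := by group

lemma fixed_apply_pow {γ : Equiv.Perm V} {ρ : V → Equiv.Perm V}
    (hfix : rotAct γ ρ = ρ) (k : ℕ) (w : V) :
    ρ ((γ ^ k) w) = γ ^ k * ρ w * (γ ^ k)⁻¹ := by
  induction k with
  | zero => simp
  | succ n ih =>
    have h1 : ∀ x, γ * ρ x * γ⁻¹ = ρ (γ x) := by
      intro x
      have h2 := congrFun hfix (γ x)
      simpa [rotAct] using h2
    rw [pow_succ', Equiv.Perm.mul_apply, ← h1, ih]
    group

end Aux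

/-- Theorem: for a graph automorphism `γ`, the number of rotation systems fixed by `γ` is the
product, over a complete set `S` of representatives of the orbits of `γ` on the vertex set,
of the cardinalities of the fixed sets `F_v(γ^{l(v,γ)})`. -/
theorem card_fixed_eq_prod {V : Type*} [Fintype V] [DecidableEq V] (G : SimpleGraph V)
    (γ : Equiv.Perm V) (hγ : γ ∈ autSet G) (S : Finset V)
    (hS : ∀ v : V, ∃! u : V, u ∈ S ∧ ∃ k : ℕ, (γ ^ k) u = v) :
    ({ρ | IsRotationSystem G ρ ∧ rotAct γ ρ = ρ}).ncard
      = ∏ v ∈ S, (fixedAt G v (γ ^ orbitLen γ v)).ncard := by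
  classical
  choose r hrS k hk using fun v => (hS v).exists
  have hruniq : ∀ v u, u ∈ S → (∃ j : ℕ, (γ ^ j) u = v) → u = r v := by
    intro v u hu hj
    exact (hS v).unique ⟨hu, hj⟩ ⟨hrS v, k v, hk v⟩
  have hLfix : ∀ v : V, (γ ^ orbitLen γ v) v = v := by
    intro v; rw [orbitLen_eq_minimalPeriod]; exact perm_pow_minimalPeriod_apply γ v
  have hcommOf : ∀ v (σ : Equiv.Perm V), σ ∈ fixedAt G v (γ ^ orbitLen γ v) →
      Commute (γ ^ Function.minimalPeriod ⇑γ v) σ := by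
    intro v σ hσ
    have h3 := hσ.2.2
    rw [orbitLen_eq_minimalPeriod] at h3
    rw [mul_inv_eq_iff_eq_mul] at h3
    exact h3
  set A : Set (V → Equiv.Perm V) := {ρ | IsRotationSystem G ρ ∧ rotAct γ ρ = ρ} with hA
  -- the forward map
  have hmemΦ : ∀ (ρ : A) (v : S), (ρ.1 v.1) ∈ fixedAt G v.1 (γ ^ orbitLen γ v.1) := by
    rintro ⟨ρ, hρ1, hρ2⟩ ⟨v, hv⟩
    refine ⟨(hρ1 v).1, (hρ1 v).2, ?_⟩
    have h4 := (fixed_apply_pow hρ2 (orbitLen γ v) v).symm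
    rwa [hLfix v] at h4
  set Φ : A → (∀ v : S, (fixedAt G v.1 (γ ^ orbitLen γ v.1))) :=
    fun ρ v => ⟨ρ.1 v.1, hmemΦ ρ v⟩ with hΦ
  have hinj : Function.Injective Φ := by
    rintro ⟨ρ, hρ⟩ ⟨ρ', hρ'⟩ hΦeq
    have hagree : ∀ v ∈ S, ρ v = ρ' v := by
      intro v hv
      have := congrFun hΦeq ⟨v, hv⟩
      simpa [hΦ] using this
    refine Subtype.ext (funext fun w => ?_)
    show ρ w = ρ' w
    have h5 : ρ w = γ ^ k w * ρ (r w) * (γ ^ k w)⁻¹ := by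
      conv_lhs => rw [← hk w]
      exact fixed_apply_pow hρ.2 (k w) (r w)
    have h6 : ρ' w = γ ^ k w * ρ' (r w) * (γ ^ k w)⁻¹ := by
      conv_lhs => rw [← hk w]
      exact fixed_apply_pow hρ'.2 (k w) (r w)
    rw [h5, h6, hagree (r w) (hrS w)]
  have hsurj : Function.Surjective Φ := by
    intro f
    set F : V → Equiv.Perm V := fun v => if h : v ∈ S then (f ⟨v, h⟩ : Equiv.Perm V) else 1
      with hF
    have hFmem : ∀ v ∈ S, F v ∈ fixedAt G v (γ ^ orbitLen γ v) := by
      intro v hv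
      rw [hF]; simp only [dif_pos hv]
      exact (f ⟨v, hv⟩).2
    set ρ₀ : V → Equiv.Perm V := fun w => γ ^ k w * F (r w) * (γ ^ k w)⁻¹ with hρ₀
    -- key: conjugation independent of the chosen exponent
    have hconj : ∀ w (a b : ℕ), (γ ^ a) (r w) = (γ ^ b) (r w) →
        γ ^ a * F (r w) * (γ ^ a)⁻¹ = γ ^ b * F (r w) * (γ ^ b)⁻¹ := by
      intro w a b hab
      exact conj_pow_eq (hcommOf (r w) _ (hFmem (r w) (hrS w))) hab
    have hρ₀mem : ρ₀ ∈ A := by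
      constructor
      · intro w
        have hσ := hFmem (r w) (hrS w)
        have hN : G.neighborSet w = (γ ^ k w) '' G.neighborSet (r w) := by
          have h9 := autSet_neighbor (autSet_pow hγ (k w)) (r w)
          rwa [hk w] at h9
        constructor
        · rw [hρ₀]
          simp only
          rw [hN]
          exact isCycleOn_conj hσ.1 (γ ^ k w)
        · intro x hx
          have hx' : (γ ^ k w)⁻¹ x ∉ G.neighborSet (r w) := by
            intro hc
            exact hx (by rw [hN]; exact ⟨(γ ^ k w)⁻¹ x, hc, by simp⟩)
          rw [hρ₀]
          simp only [Equiv.Perm.mul_apply]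
          rw [hσ.2.1 _ hx']
          simp
      · funext w
        have hw' : (γ ^ (k (γ⁻¹ w) + 1)) (r (γ⁻¹ w)) = w := by
          rw [pow_succ', Equiv.Perm.mul_apply, hk (γ⁻¹ w)]
          simp
        have hru : r (γ⁻¹ w) = r w := hruniq w (r (γ⁻¹ w)) (hrS (γ⁻¹ w)) ⟨_, hw'⟩
        rw [hru] at hw'
        show γ * ρ₀ (γ⁻¹ w) * γ⁻¹ = ρ₀ w
        rw [hρ₀]
        simp only
        rw [hru]
        have hstep : γ * (γ ^ k (γ⁻¹ w) * F (r w) * (γ ^ k (γ⁻¹ w))⁻¹) * γ⁻¹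
            = γ ^ (k (γ⁻¹ w) + 1) * F (r w) * (γ ^ (k (γ⁻¹ w) + 1))⁻¹ := by
          rw [pow_succ']; group
        rw [hstep]
        refine hconj w _ _ ?_
        rw [hw', hk w]
    refine ⟨⟨ρ₀, hρ₀mem⟩, ?_⟩
    funext v
    refine Subtype.ext ?_
    show ρ₀ v.1 = (f v : Equiv.Perm V)
    have hrv : v.1 = r v.1 := hruniq v.1 v.1 v.2 ⟨0, by simp⟩
    have hFv : F (r v.1) = (f v : Equiv.Perm V) := by
      rw [← hrv, hF]; simp only [dif_pos v.2]
    rw [hρ₀]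
    simp only
    rw [hFv]
    have h7 : (γ ^ k v.1) v.1 = (γ ^ 0) v.1 := by
      have h9 := hk v.1
      rw [← hrv] at h9
      simpa using h9
    have h8 := conj_pow_eq (hcommOf v.1 _ ((f v).2)) h7
    rw [h8]
    simp
  have hbij : Function.Bijective Φ := ⟨hinj, hsurj⟩
  have hcards : Nat.card A = Nat.card (∀ v : S, (fixedAt G v.1 (γ ^ orbitLen γ v.1))) :=
    Nat.card_eq_of_bijective Φ hbij
  calc A.ncard = Nat.card A := (Nat.card_coe_set_eq _).symm
    _ = Nat.card (∀ v : S, (fixedAt G v.1 (γ ^ orbitLen γ v.1))) := hcards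
    _ = ∏ v : S, Nat.card (fixedAt G v.1 (γ ^ orbitLen γ v.1)) := Nat.card_pi
    _ = ∏ v : S, (fixedAt G v.1 (γ ^ orbitLen γ v.1)).ncard := by
        simp_rw [Nat.card_coe_set_eq]
    _ = ∏ v ∈ S, (fixedAt G v (γ ^ orbitLen γ v)).ncard :=
        Finset.prod_coe_sort S (fun v => (fixedAt G v (γ ^ orbitLen γ v)).ncard)
end

section
/- (Decomposition Theorem.) Let G be a finite simple graph with vertex set V. In the multivariate polynomial ring MvPolynomial ℕ ℚ, for a graph automorphism γ let s(γ) = Π_{k ≥ 1} X_k^{c_k(γ)}, where c_k(γ) is the number of cycles of length k of the permutation γ of V (fixed points counting as cycles of length 1); define the imbedding sum Z(G) = (1/|Γ(G)|) · Σ_{γ ∈ Γ(G)} |F(γ)| · s(γ), and for a subgroup H ≤ Γ(G) define the cycle index Z(H) = (1/|H|) · Σ_{γ ∈ H} s(γ). Then Z(G) = Σ_{ρ ∈ T} Z(Γ_ρ(G)), where T is a complete set of representatives of the orbits of Γ(G) on the set of rotation systems of G (the unlabeled imbeddings). -/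
/-- `c_k(γ)`: the number of cycles of length `k` of the permutation `γ` (fixed points counting
as cycles of length 1). -/
noncomputable def cycleCount {V : Type*} (γ : Equiv.Perm V) (k : ℕ) : ℕ :=
  ({v | orbitLen γ v = k}).ncard / k

/-- The cycle-type monomial `s(γ) = Π_k X_k ^ c_k(γ)` in `MvPolynomial ℕ ℚ`. -/
noncomputable def cycleMonomial {V : Type*} [Fintype V] (γ : Equiv.Perm V) :
    MvPolynomial ℕ ℚ :=
  ∏ k ∈ Finset.range (Fintype.card V + 1), (MvPolynomial.X k) ^ cycleCount γ k

/-- The cycle index `Z(H) = (1/|H|) Σ_{γ ∈ H} s(γ)` of a set `H` of permutations of the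
vertices. -/
noncomputable def cycleIndex {V : Type*} [Fintype V] (H : Set (Equiv.Perm V)) :
    MvPolynomial ℕ ℚ :=
  ((H.ncard : ℚ))⁻¹ • ∑ᶠ γ ∈ H, cycleMonomial γ

/-- The imbedding sum `Z(G) = (1/|Γ(G)|) Σ_{γ ∈ Γ(G)} |F(γ)| s(γ)` of a simple graph. -/
noncomputable def imbeddingSum {V : Type*} [Fintype V] (G : SimpleGraph V) :
    MvPolynomial ℕ ℚ :=
  (((autSet G).ncard : ℚ))⁻¹ •
    ∑ᶠ γ ∈ autSet G,
      (({ρ | IsRotationSystem G ρ ∧ rotAct γ ρ = ρ}).ncard : ℚ) • cycleMonomial γ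

/-! Weighted Burnside. Summing `|F(γ)| s(γ)` over `Γ(G)` counts the pairs `(γ, ρ)` with
`γ · ρ = ρ`, so it equals `Σ_ρ Σ_{γ ∈ Γ_ρ(G)} s(γ)`. Stabilizers along an orbit are conjugate
and `s` is a class function, so the inner sum is constant on each orbit; by orbit–stabilizer an
orbit has `|Γ(G)| / |Γ_ρ(G)|` elements, which turns its contribution into `Z(Γ_ρ(G))`. -/

namespace MulAction

variable {H X M : Type*} [Group H] [MulAction H X] [AddCommMonoid M]

theorem finsum_stabilizer_smul_eq_finsum_stabilizer {f : H → M}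
    (hf : ∀ g h, f (h * g * h⁻¹) = f g) (h : H) (x : X) :
    ∑ᶠ g : stabilizer H (h • x), f g = ∑ᶠ g : stabilizer H x, f g := by
  rw [← finsum_comp_equiv (stabilizerEquivStabilizer (rfl : h • x = h • x)).toEquiv]
  simp [stabilizerEquivStabilizer_apply, MulAut.conj_apply, hf]

theorem finsum_card_fixedBy_nsmul_eq_finsum_stabilizer [Finite H] [Finite X] (f : H → M) :
    ∑ᶠ g : H, Nat.card (fixedBy X g) • f g = ∑ᶠ x : X, ∑ᶠ g : stabilizer H x, f g := by
  classical
  have := Fintype.ofFinite H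
  have := Fintype.ofFinite X
  let e : (Σ g : H, fixedBy X g) ≃ Σ x : X, stabilizer H x :=
    (Equiv.subtypeProdEquivSigmaSubtype fun g x => g • x = x).symm.trans <|
      ((Equiv.prodComm H X).subtypeEquiv fun _ => Iff.rfl).trans <|
        Equiv.subtypeProdEquivSigmaSubtype fun x g => g ∈ stabilizer H x
  simpa only [Fintype.sum_sigma, Finset.sum_const, Finset.card_univ, finsum_eq_sum_of_fintype,
    Nat.card_eq_fintype_card] using
    Fintype.sum_equiv e (fun σ => f σ.1) (fun σ => f σ.2) fun _ => rfl

theorem finsum_eq_sum_finsum_orbit [Finite X] {T : Finset X}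
    (hT : ∀ x : X, ∃! t, t ∈ T ∧ t ∈ orbit H x) (F : X → M) :
    ∑ᶠ x, F x = ∑ t ∈ T, ∑ᶠ x ∈ orbit H t, F x := by
  have hcover : ⋃ t ∈ (T : Set X), orbit H t = Set.univ := by
    refine Set.eq_univ_of_forall fun x => ?_
    obtain ⟨t, ⟨htT, htx⟩, -⟩ := hT x
    exact Set.mem_biUnion htT (mem_orbit_symm.mp htx)
  have hdisj : (T : Set X).PairwiseDisjoint (orbit H) := by
    intro t ht t' ht' hne
    refine Set.disjoint_left.mpr fun x hx hx' => hne ?_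
    obtain ⟨_, -, huniq⟩ := hT x
    exact (huniq t ⟨ht, mem_orbit_symm.mp hx⟩).trans (huniq t' ⟨ht', mem_orbit_symm.mp hx'⟩).symm
  rw [← finsum_mem_univ, ← hcover, finsum_mem_biUnion hdisj T.finite_toSet
    fun _ _ => Set.toFinite _, finsum_mem_coe_finset]

theorem finsum_mem_orbit_finsum_stabilizer_eq_ncard_nsmul [Finite X] {f : H → M}
    (hf : ∀ g h, f (h * g * h⁻¹) = f g) (x : X) :
    ∑ᶠ y ∈ orbit H x, ∑ᶠ g : stabilizer H y, f g
      = (orbit H x).ncard • ∑ᶠ g : stabilizer H x, f g := by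
  have hfin : (orbit H x).Finite := Set.toFinite _
  rw [finsum_mem_congr rfl fun y hy => ?_, finsum_mem_eq_finite_toFinset_sum _ hfin,
    Finset.sum_const, Set.ncard_eq_toFinset_card _ hfin]
  obtain ⟨h, rfl⟩ := hy
  exact finsum_stabilizer_smul_eq_finsum_stabilizer hf h x

theorem inv_card_smul_finsum_fixedBy_eq_sum_stabilizer [Finite H] [Finite X] [Module ℚ M]
    {f : H → M} (hf : ∀ g h, f (h * g * h⁻¹) = f g)
    {T : Finset X} (hT : ∀ x : X, ∃! t, t ∈ T ∧ t ∈ orbit H x) :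
    (Nat.card H : ℚ)⁻¹ • ∑ᶠ g : H, (Nat.card (fixedBy X g) : ℚ) • f g
      = ∑ t ∈ T, (Nat.card (stabilizer H t) : ℚ)⁻¹ • ∑ᶠ g : stabilizer H t, f g := by
  simp_rw [Nat.cast_smul_eq_nsmul]
  rw [finsum_card_fixedBy_nsmul_eq_finsum_stabilizer, finsum_eq_sum_finsum_orbit hT,
    Finset.smul_sum]
  refine Finset.sum_congr rfl fun t _ => ?_
  rw [finsum_mem_orbit_finsum_stabilizer_eq_ncard_nsmul hf, ← Nat.cast_smul_eq_nsmul ℚ,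
    smul_smul, ← index_stabilizer, ← Subgroup.index_mul_card (stabilizer H t)]
  congr 1
  have : (Nat.card (stabilizer H t) : ℚ) ≠ 0 := Nat.cast_ne_zero.mpr Nat.card_pos.ne'
  have : ((stabilizer H t).index : ℚ) ≠ 0 := Nat.cast_ne_zero.mpr Subgroup.index_ne_zero_of_finite
  push_cast
  field_simp

end MulAction

section Conjugation

variable {V : Type*}

lemma orbitLen_conj (δ γ : Equiv.Perm V) (v : V) :
    orbitLen (δ * γ * δ⁻¹) (δ v) = orbitLen γ v := by
  have hset : {w | ∃ k : ℕ, ((δ * γ * δ⁻¹) ^ k) (δ v) = w}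
      = δ '' {w | ∃ k : ℕ, (γ ^ k) v = w} := by
    ext w
    simp only [Set.mem_ofPred_eq, Set.mem_image, conj_pow]
    constructor
    · rintro ⟨k, hk⟩
      exact ⟨(γ ^ k) v, ⟨k, rfl⟩, by simpa using hk⟩
    · rintro ⟨x, ⟨k, rfl⟩, rfl⟩
      exact ⟨k, by simp⟩
  rw [orbitLen, hset, Set.ncard_image_of_injective _ δ.injective, orbitLen]

lemma cycleCount_conj (δ γ : Equiv.Perm V) (k : ℕ) :
    cycleCount (δ * γ * δ⁻¹) k = cycleCount γ k := by
  have hset : {v | orbitLen (δ * γ * δ⁻¹) v = k} = δ '' {v | orbitLen γ v = k} := by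
    ext v
    obtain ⟨u, rfl⟩ := δ.surjective v
    simp [orbitLen_conj]
  rw [cycleCount, hset, Set.ncard_image_of_injective _ δ.injective, cycleCount]

lemma cycleMonomial_conj [Fintype V] (δ γ : Equiv.Perm V) :
    cycleMonomial (δ * γ * δ⁻¹) = cycleMonomial γ := by
  simp only [cycleMonomial, cycleCount_conj]

end Conjugation

section RotationSystem

variable {V : Type*} {G : SimpleGraph V}

def autGroup (G : SimpleGraph V) : Subgroup (Equiv.Perm V) where
  carrier := autSet G
  one_mem' _ _ := Iff.rfl
  mul_mem' hγ hδ u w := (hγ _ _).trans (hδ u w)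
  inv_mem' {γ} hγ u w := by simpa using (hγ (γ⁻¹ u) (γ⁻¹ w)).symm

lemma mem_autGroup {γ : Equiv.Perm V} : γ ∈ autGroup G ↔ γ ∈ autSet G := Iff.rfl

lemma rotAct_one (ρ : V → Equiv.Perm V) : rotAct 1 ρ = ρ := by
  funext w; simp [rotAct]

lemma rotAct_mul (γ δ : Equiv.Perm V) (ρ : V → Equiv.Perm V) :
    rotAct (γ * δ) ρ = rotAct γ (rotAct δ ρ) := by
  funext w; simp [rotAct, mul_assoc]

lemma neighborSet_eq_image {γ : Equiv.Perm V} (hγ : γ ∈ autSet G) (w : V) :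
    G.neighborSet w = γ '' G.neighborSet (γ⁻¹ w) := by
  ext u
  rw [Set.mem_image_equiv]
  simpa using hγ (γ⁻¹ w) (γ⁻¹ u)

lemma IsRotationSystem.rotAct {γ : Equiv.Perm V} (hγ : γ ∈ autSet G) {ρ : V → Equiv.Perm V}
    (hρ : IsRotationSystem G ρ) : IsRotationSystem G (rotAct γ ρ) := by
  intro w
  rw [neighborSet_eq_image hγ w]
  refine ⟨(hρ (γ⁻¹ w)).1.conj, fun u hu => ?_⟩
  rw [Set.mem_image_equiv, ← Equiv.Perm.inv_def] at hu
  simp only [_root_.rotAct, Equiv.Perm.coe_mul, Function.comp_apply, (hρ (γ⁻¹ w)).2 _ hu]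
  exact γ.apply_symm_apply u

variable (G) in
abbrev RotationSystem := {ρ : V → Equiv.Perm V // IsRotationSystem G ρ}

instance : MulAction (autGroup G) (RotationSystem G) where
  smul γ ρ := ⟨rotAct γ ρ, ρ.2.rotAct γ.2⟩
  one_smul ρ := Subtype.ext (rotAct_one ρ.1)
  mul_smul γ δ ρ := Subtype.ext (rotAct_mul γ δ ρ.1)

lemma RotationSystem.coe_smul (γ : autGroup G) (ρ : RotationSystem G) :
    ((γ • ρ : RotationSystem G) : V → Equiv.Perm V) = rotAct γ ρ := rfl

end RotationSystem

section Decomposition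

open MulAction

variable {V : Type*} {G : SimpleGraph V}

lemma RotationSystem.mem_orbit_iff {ρ σ : RotationSystem G} :
    σ ∈ orbit (autGroup G) ρ ↔ ∃ γ ∈ autSet G, rotAct γ ρ = σ := by
  simp [MulAction.mem_orbit_iff, Subtype.ext_iff, RotationSystem.coe_smul, mem_autGroup]

lemma existsUnique_mem_subtype_mem_orbit [DecidablePred (IsRotationSystem G)]
    {T : Finset (V → Equiv.Perm V)} (hT : ∀ ρ ∈ T, IsRotationSystem G ρ)
    (hT' : ∀ ρ : V → Equiv.Perm V, IsRotationSystem G ρ →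
      ∃! ρ' : V → Equiv.Perm V, ρ' ∈ T ∧ ∃ γ ∈ autSet G, rotAct γ ρ = ρ')
    (ρ : RotationSystem G) :
    ∃! t, t ∈ T.subtype (IsRotationSystem G) ∧ t ∈ orbit (autGroup G) ρ := by
  obtain ⟨σ, ⟨hσT, hσρ⟩, huniq⟩ := hT' ρ ρ.2
  refine ⟨⟨σ, hT σ hσT⟩, ⟨Finset.mem_subtype.mpr hσT, RotationSystem.mem_orbit_iff.mpr hσρ⟩,
    fun t ht => Subtype.ext <|
      huniq t ⟨Finset.mem_subtype.mp ht.1, RotationSystem.mem_orbit_iff.mp ht.2⟩⟩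

lemma card_fixedBy_rotationSystem_eq_ncard (γ : autGroup G) :
    Nat.card (fixedBy (RotationSystem G) γ)
      = {ρ | IsRotationSystem G ρ ∧ rotAct γ ρ = ρ}.ncard := by
  rw [← Nat.card_coe_set_eq]
  exact Nat.card_congr
    { toFun ρ := ⟨ρ.1, ρ.1.2, congrArg Subtype.val ρ.2⟩
      invFun ρ := ⟨⟨ρ, ρ.2.1⟩, Subtype.ext ρ.2.2⟩
      left_inv _ := rfl
      right_inv _ := rfl }

variable [Fintype V]

lemma cycleIndex_eq_of_equiv {K : Type*} {S : Set (Equiv.Perm V)} (e : K ≃ S) :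
    cycleIndex S = (Nat.card K : ℚ)⁻¹ • ∑ᶠ k, cycleMonomial (e k : Equiv.Perm V) := by
  rw [cycleIndex, ← Nat.card_coe_set_eq, Nat.card_congr e, ← finsum_set_coe_eq_finsum_mem,
    finsum_comp_equiv e (f := fun γ : S => cycleMonomial (γ : Equiv.Perm V))]

lemma cycleIndex_stabilizer (ρ : RotationSystem G) :
    cycleIndex {γ ∈ autSet G | rotAct γ ρ = ρ} = (Nat.card (stabilizer (autGroup G) ρ) : ℚ)⁻¹ •
      ∑ᶠ γ : stabilizer (autGroup G) ρ, cycleMonomial (γ : Equiv.Perm V) := by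
  let e : stabilizer (autGroup G) ρ ≃ {γ ∈ autSet G | rotAct γ ρ = ρ} :=
    { toFun γ := ⟨γ.1.1, γ.1.2, congrArg Subtype.val γ.2⟩
      invFun γ := ⟨⟨γ.1, γ.2.1⟩, Subtype.ext γ.2.2⟩
      left_inv _ := rfl
      right_inv _ := rfl }
  exact cycleIndex_eq_of_equiv e

lemma imbeddingSum_eq : imbeddingSum G = (Nat.card (autGroup G) : ℚ)⁻¹ •
    ∑ᶠ γ : autGroup G,
      (Nat.card (fixedBy (RotationSystem G) γ) : ℚ) • cycleMonomial (γ : Equiv.Perm V) := by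
  simp_rw [card_fixedBy_rotationSystem_eq_ncard]
  rw [imbeddingSum, ← Nat.card_coe_set_eq, ← finsum_set_coe_eq_finsum_mem]
  rfl

end Decomposition

theorem decomposition_theorem_general {V : Type*} [Fintype V] (G : SimpleGraph V)
    (T : Finset (V → Equiv.Perm V))
    (hT : ∀ ρ ∈ T, IsRotationSystem G ρ)
    (hT' : ∀ ρ : V → Equiv.Perm V, IsRotationSystem G ρ →
      ∃! ρ' : V → Equiv.Perm V, ρ' ∈ T ∧ ∃ γ ∈ autSet G, rotAct γ ρ = ρ') :
    imbeddingSum G = ∑ ρ ∈ T, cycleIndex {γ ∈ autSet G | rotAct γ ρ = ρ} := by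
  classical
  have hclass (g h : autGroup G) : cycleMonomial ((h * g * h⁻¹ : autGroup G) : Equiv.Perm V)
      = cycleMonomial (g : Equiv.Perm V) := by
    rw [Subgroup.coe_mul, Subgroup.coe_mul, Subgroup.coe_inv, cycleMonomial_conj]
  rw [imbeddingSum_eq, MulAction.inv_card_smul_finsum_fixedBy_eq_sum_stabilizer hclass
    (existsUnique_mem_subtype_mem_orbit hT hT'), ← Finset.sum_subtype_of_mem _ hT]
  exact Finset.sum_congr rfl fun ρ _ => (cycleIndex_stabilizer ρ).symm

/-- Theorem (Decomposition Theorem): the imbedding sum of a finite simple graph `G` is the sum,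
over a complete set `T` of representatives of the unlabeled imbeddings (orbits of `Γ(G)` on
rotation systems), of the cycle indexes of the corresponding map-automorphism groups
`Γ_ρ(G)`. -/
theorem decomposition_theorem {V : Type*} [Fintype V] [DecidableEq V] (G : SimpleGraph V)
    (T : Finset (V → Equiv.Perm V))
    (hT : ∀ ρ ∈ T, IsRotationSystem G ρ)
    (hT' : ∀ ρ : V → Equiv.Perm V, IsRotationSystem G ρ →
      ∃! ρ' : V → Equiv.Perm V, ρ' ∈ T ∧ ∃ γ ∈ autSet G, rotAct γ ρ = ρ') :
    imbeddingSum G = ∑ ρ ∈ T, cycleIndex {γ ∈ autSet G | rotAct γ ρ = ρ} :=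
  decomposition_theorem_general G T hT hT'
end

section
/- (Pólya enumeration for a permutation group, as used for map configurations.) Let Γ be a finite group of permutations of a finite set V, let Y be a finite set of figures with weight function w : Y → ℕ, and let Γ act on the set of colorings Y^V by (γ·c)(v) = c(γ⁻¹(v)). The total weight W(c) = Σ_{v ∈ V} w(c(v)) is constant on each orbit. Then in the polynomial ring ℚ[x]: Σ_{O} x^{W(c_O)} = (1/|Γ|) · Σ_{γ ∈ Γ} Π_{k ≥ 1} ( Σ_{y ∈ Y} x^{k·w(y)} )^{c_k(γ)}, where the left-hand sum ranges over the orbits O of Γ on Y^V with c_O any representative of O, and c_k(γ) is the number of cycles of length k of γ acting on V (fixed points counting as cycles of length 1). -/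
/-!
Weighted Burnside: the weight `x ^ W(c)` is constant on orbits, and by orbit–stabiliser each
orbit is met exactly `|Γ|` times by the pairs `(γ, c)` with `γ • c = c`; so `|Γ|` times the
left-hand side is `Σ_γ Σ_{γ • c = c} x ^ W(c)`. A coloring fixed by `γ` is a coloring of the
cycles of `γ`, and a cycle of length `k` coloured `y` has weight `k * w y`; hence the inner sum
factors as `Π_{cycles} Σ_y x ^ (|cycle| * w y)`, which is the cycle-index product.
-/

open Finset MulAction

attribute [local instance] arrowAction

namespace MulAction

variable {G X M : Type*} [Group G] [MulAction G X] [AddCommMonoid M]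

theorem sum_sum_fixedBy_eq_card_smul_sum_orbits [Fintype G] [∀ g : G, Fintype (fixedBy X g)]
    [Fintype (orbitRel.Quotient G X)] (φ : orbitRel.Quotient G X → M) :
    ∑ g : G, ∑ x : fixedBy X g, φ ⟦(x : X)⟧ = Fintype.card G • ∑ ω, φ ω := by
  rw [← Fintype.sum_sigma (fun p : Σ g : G, fixedBy X g => φ ⟦(p.2 : X)⟧),
    Fintype.sum_equiv (sigmaFixedByEquivOrbitsProdGroup G X) (fun p => φ ⟦(p.2 : X)⟧)
      (fun p => φ p.1) (fun _ => rfl),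
    Fintype.sum_prod_type, smul_sum]
  simp

theorem sum_transversal_eq_sum_orbits [Fintype (orbitRel.Quotient G X)] {T : Finset X}
    (hT : ∀ x : X, ∃! t, t ∈ T ∧ ∃ g : G, g • x = t) (φ : orbitRel.Quotient G X → M) :
    ∑ t ∈ T, φ ⟦t⟧ = ∑ ω, φ ω := by
  refine sum_nbij (fun t => ⟦t⟧) (fun _ _ => mem_univ _) ?_ ?_ (fun _ _ => rfl)
  · intro t₁ ht₁ t₂ ht₂ h
    obtain ⟨g, hg⟩ := mem_orbit_iff.1 (orbitRel_apply.1 (Quotient.exact h.symm))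
    exact (hT t₁).unique ⟨ht₁, 1, one_smul G t₁⟩ ⟨ht₂, g, hg⟩
  · rintro ω -
    obtain ⟨x, rfl⟩ := Quotient.exists_rep ω
    obtain ⟨t, ⟨ht, g, rfl⟩, -⟩ := hT x
    exact ⟨g • x, ht, Quotient.sound ⟨g, rfl⟩⟩

theorem sum_arrow_smul_apply {V Y : Type*} [MulAction G V] [Fintype V] (g : G) (c : V → Y)
    (f : Y → M) : ∑ v, f ((g • c) v) = ∑ v, f (c v) :=
  Equiv.sum_comp (toPerm g⁻¹) (fun v => f (c v))

end MulAction

theorem Finset.card_filter_card_fiber_eq_div {α β : Type*} [Fintype α] [Fintype β]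
    [DecidableEq β] {p : α → β} (hp : Function.Surjective p) (k : ℕ) :
    #{b | #{a | p a = b} = k} = #{a | #{a' | p a' = p a} = k} / k := by
  obtain rfl | hk := k.eq_zero_or_pos
  · simp only [Nat.div_zero, card_eq_zero, filter_eq_empty_iff, mem_univ, true_implies]
    intro b
    obtain ⟨a, rfl⟩ := hp b
    exact fun h => h rfl
  · rw [card_eq_sum_card_fiberwise (f := p) (t := {b | #{a | p a = b} = k})
      (fun a ha => by simpa using ha), sum_congr rfl fun b hb => ?_, sum_const, smul_eq_mul,
      Nat.mul_div_cancel _ hk]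
    rw [mem_filter] at hb
    rw [filter_filter, ← hb.2]
    congr 1
    ext a
    simp only [mem_filter, mem_univ, true_and, and_iff_right_iff_imp]
    rintro rfl
    rfl

theorem Fintype.sum_pow_sum_comp_eq_prod_sum {α β Y R : Type*} [Fintype α] [Fintype β]
    [DecidableEq β] [Fintype Y] [CommSemiring R] (p : α → β) (w : Y → ℕ) (x : R) :
    ∑ f : β → Y, x ^ ∑ a, w (f (p a)) = ∏ b, ∑ y, x ^ (#{a | p a = b} * w y) := by
  have sum_fiberwise (f : β → Y) : ∑ a, w (f (p a)) = ∑ b, #{a | p a = b} * w (f b) := by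
    simp_rw [← Finset.sum_fiberwise' univ p (fun b => w (f b)), sum_const, smul_eq_mul]
  simp_rw [sum_fiberwise, ← prod_pow_eq_pow_sum, Fintype.prod_sum]

namespace Equiv.Perm

variable {V Y : Type*}

theorem apply_eq_of_mem_fixedBy_of_sameCycle {γ : Perm V} {c : V → Y}
    (hc : c ∈ fixedBy (V → Y) γ) {u v : V} (h : γ.SameCycle u v) : c u = c v := by
  obtain ⟨i, rfl⟩ := h
  have hi : (γ ^ i)⁻¹ ∈ stabilizer (Perm V) c := inv_mem (zpow_mem hc i)
  have : c ((γ ^ i)⁻¹⁻¹ • u) = c u := congrFun hi u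
  simpa using this.symm

def fixedByEquivFunOnCycles (γ : Perm V) :
    fixedBy (V → Y) γ ≃ (Quotient (SameCycle.setoid γ) → Y) where
  toFun c := Quotient.lift c.1 fun _ _ => apply_eq_of_mem_fixedBy_of_sameCycle c.2
  invFun f := ⟨fun v => f (Quotient.mk'' v), funext fun v =>
    congrArg f (Quotient.sound (sameCycle_symm_apply_left.2 (SameCycle.refl γ v)))⟩
  left_inv _ := rfl
  right_inv _ := funext fun q => Quotient.inductionOn q fun _ => rfl

end Equiv.Perm

section CycleIndex

open Equiv Perm

variable {V : Type*} [Fintype V]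

theorem orbitLen_eq_card_sameCycle [DecidableEq V] (γ : Perm V) (v : V) :
    orbitLen γ v = #{u | γ.SameCycle v u} := by
  rw [orbitLen, ← Set.ncard_coe_finset]
  congr 1
  ext u
  simp only [Set.mem_ofPred_eq, coe_filter, mem_univ, true_and]
  exact ⟨fun ⟨k, hk⟩ => ⟨k, by simpa using hk⟩, fun h => h.exists_pow_eq'.imp fun _ => And.right⟩

open scoped Classical in
theorem cycleCount_eq_card_filter (γ : Perm V) (k : ℕ) :
    cycleCount γ k = #{q : Quotient (SameCycle.setoid γ) | #{v | Quotient.mk'' v = q} = k} := by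
  rw [card_filter_card_fiber_eq_div Quotient.mk''_surjective, cycleCount, ← Set.ncard_coe_finset]
  congr 2
  ext v
  have h (u : V) : SameCycle.setoid γ u v ↔ γ.SameCycle v u := sameCycle_comm
  simp only [orbitLen_eq_card_sameCycle, Quotient.eq'', Set.mem_ofPred_eq, coe_filter, mem_univ,
    true_and, h]

theorem sum_fixedBy_pow_weight_eq_prod_cycleCount {Y R : Type*} [Fintype Y] [CommSemiring R]
    (γ : Perm V) [Fintype (fixedBy (V → Y) γ)] (w : Y → ℕ) (x : R) :
    ∑ c : fixedBy (V → Y) γ, x ^ ∑ v, w ((c : V → Y) v) =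
      ∏ k ∈ range (Fintype.card V + 1), (∑ y, x ^ (k * w y)) ^ cycleCount γ k := by
  classical
  rw [Fintype.sum_equiv (fixedByEquivFunOnCycles γ) (fun c => x ^ ∑ v, w ((c : V → Y) v))
      (fun f => x ^ ∑ v, w (f (Quotient.mk'' v))) (fun _ => rfl),
    Fintype.sum_pow_sum_comp_eq_prod_sum,
    ← prod_fiberwise_of_maps_to' (t := range (Fintype.card V + 1))
      (g := fun q => #{v | Quotient.mk'' v = q}) (f := fun k => ∑ y, x ^ (k * w y))
      (fun q _ => mem_range.2 (Nat.lt_succ_of_le (card_le_univ _)))]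
  refine prod_congr rfl fun k _ => ?_
  rw [prod_const, cycleCount_eq_card_filter]

end CycleIndex

theorem polya_enumeration_general {V : Type*} [Fintype V]
    {Y : Type*} [Fintype Y]
    (H : Subgroup (Equiv.Perm V)) (w : Y → ℕ)
    (T : Finset (V → Y))
    (hT : ∀ c : V → Y, ∃! t : V → Y, t ∈ T ∧ ∃ γ ∈ H, (fun v => c (γ⁻¹ v)) = t) :
    ∑ c ∈ T, (Polynomial.X : Polynomial ℚ) ^ (∑ v : V, w (c v))
      = ((Nat.card H : ℚ))⁻¹ •
          ∑ᶠ γ ∈ (H : Set (Equiv.Perm V)),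
            ∏ k ∈ Finset.range (Fintype.card V + 1),
              (∑ y : Y, (Polynomial.X : Polynomial ℚ) ^ (k * w y)) ^ cycleCount γ k := by
  classical
  let weight : orbitRel.Quotient H (V → Y) → Polynomial ℚ :=
    Quotient.lift (fun c => Polynomial.X ^ ∑ v, w (c v)) fun _ c h => by
      obtain ⟨g, rfl⟩ := mem_orbit_iff.1 (orbitRel_apply.1 h)
      rw [sum_arrow_smul_apply]
  have hT' : ∀ c : V → Y, ∃! t, t ∈ T ∧ ∃ g : H, g • c = t := by
    have (c t : V → Y) : (∃ g : H, g • c = t) ↔ ∃ γ ∈ H, (fun v => c (γ⁻¹ v)) = t :=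
      ⟨fun ⟨g, h⟩ => ⟨g, g.2, h⟩, fun ⟨γ, hγ, h⟩ => ⟨⟨γ, hγ⟩, h⟩⟩
    simpa only [this] using hT
  have hH : (Fintype.card H : ℚ) ≠ 0 := Nat.cast_ne_zero.2 Fintype.card_ne_zero
  calc ∑ c ∈ T, Polynomial.X ^ ∑ v, w (c v) = ∑ ω, weight ω :=
        sum_transversal_eq_sum_orbits hT' weight
    _ = (Nat.card H : ℚ)⁻¹ • ∑ g : H, ∑ c : fixedBy (V → Y) g, weight ⟦(c : V → Y)⟧ := by
      rw [sum_sum_fixedBy_eq_card_smul_sum_orbits, Nat.card_eq_fintype_card,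
        ← Nat.cast_smul_eq_nsmul ℚ, inv_smul_smul₀ hH]
    _ = _ := by
      rw [← finsum_set_coe_eq_finsum_mem, finsum_eq_sum_of_fintype]
      congr 1
      exact Fintype.sum_congr _ _ fun g =>
        sum_fixedBy_pow_weight_eq_prod_cycleCount (g : Equiv.Perm V) w _

/-- Theorem (Pólya enumeration for a permutation group): let `H` be a finite group of
permutations of a finite set `V`, acting on colorings `c : V → Y` by `(γ·c)(v) = c(γ⁻¹(v))`,
let `w : Y → ℕ` be a weight, and let `T` be a complete set of representatives of the orbits.
Then `Σ_{orbits} x^{W(rep)} = (1/|H|) Σ_{γ ∈ H} Π_k (Σ_{y ∈ Y} x^{k·w(y)})^{c_k(γ)}` in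
`ℚ[x]`. -/
theorem polya_enumeration {V : Type*} [Fintype V] [DecidableEq V]
    {Y : Type*} [Fintype Y] [DecidableEq Y]
    (H : Subgroup (Equiv.Perm V)) (w : Y → ℕ)
    (T : Finset (V → Y))
    (hT : ∀ c : V → Y, ∃! t : V → Y, t ∈ T ∧ ∃ γ ∈ H, (fun v => c (γ⁻¹ v)) = t) :
    ∑ c ∈ T, (Polynomial.X : Polynomial ℚ) ^ (∑ v : V, w (c v))
      = ((Nat.card H : ℚ))⁻¹ •
          ∑ᶠ γ ∈ (H : Set (Equiv.Perm V)),
            ∏ k ∈ Finset.range (Fintype.card V + 1),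
              (∑ y : Y, (Polynomial.X : Polynomial ℚ) ^ (k * w y)) ^ cycleCount γ k :=
  polya_enumeration_general H w T hT
end

section
/- Let n ≥ 3 and let K_n be the complete graph on vertex set V with |V| = n, so that a rotation system for K_n assigns to each vertex v a cyclic permutation of the n−1 remaining vertices and Γ(K_n) = S_n. Then the number of orbits of the diagonal action of S_n on pairs (v, ρ), where v ∈ V and ρ is a rotation system of K_n (i.e., the number of ways to root the unlabeled imbeddings of K_n at a vertex), equals (1/(n−1)) · Σ_{d | n−1} φ(d) · ((n−2)!)^{(n−1)/d}. -/
/-!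
Write `m = n - 1`. Every rooted imbedding can be moved so that its root is the vertex `none` of
`Option (ZMod m)` and the rotation there is the translation `i ↦ i + 1` of the other vertices
`some i`. Such rotation systems are exactly the families `f : ZMod m → C`, where `C` is the set of
the `(m - 1)!` rotations at `some 0` and the rotation at `some i` is `f i` translated from `0`
to `i`. The permutations fixing `none` and commuting with the translation by `1` are the
translations, so rooted imbeddings correspond to the orbits of `ZMod m` acting on these families by
translation. Translation by `k` fixes `|C| ^ gcd(m, k)` families, and Burnside's lemma, after
grouping the `k` by `gcd(m, k)`, gives the totient sum.
-/

open Equiv Equiv.Perm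

section RotationsAt

variable {α β δ : Type*}

def rotationsAt (v : α) : Set (Perm α) := {σ | σ.IsCycleOn {v}ᶜ ∧ σ v = v}

theorem isRotationSystem_top_iff {ρ : α → Perm α} :
    IsRotationSystem ⊤ ρ ↔ ∀ v, ρ v ∈ rotationsAt v := by
  simp [IsRotationSystem, rotationsAt, SimpleGraph.neighborSet_top]

theorem Equiv.Perm.IsCycleOn.permCongr {σ : Perm α} {s : Set α} (h : σ.IsCycleOn s) (e : α ≃ β) :
    (e.permCongr σ).IsCycleOn (e '' s) := by
  refine ⟨?_, ?_⟩
  · have he : Set.BijOn e s (e '' s) := e.injective.injOn.bijOn_image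
    have he' : Set.BijOn e.symm (e '' s) s := by
      simpa [Equiv.image_symm_image] using e.symm.injective.injOn.bijOn_image (s := e '' s)
    exact he.comp (h.1.comp he')
  · rintro _ ⟨a, ha, rfl⟩ _ ⟨b, hb, rfl⟩
    obtain ⟨i, hi⟩ := h.2 ha hb
    exact ⟨i, by rw [← e.permCongrHom_coe, ← map_zpow]; simp [hi]⟩

theorem permCongr_mem_rotationsAt {v : α} {σ : Perm α} (h : σ ∈ rotationsAt v) (e : α ≃ β) :
    e.permCongr σ ∈ rotationsAt (e v) := by
  refine ⟨?_, by simp [h.2]⟩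
  simpa [Set.image_compl_eq e.bijective] using h.1.permCongr e

def rotCongr (e : α ≃ β) (ρ : α → Perm α) : β → Perm β := fun w => e.permCongr (ρ (e.symm w))

theorem rotAct_eq_rotCongr (γ : Perm α) (ρ : α → Perm α) : rotAct γ ρ = rotCongr γ ρ := rfl

theorem IsRotationSystem.rotCongr {ρ : α → Perm α} (h : IsRotationSystem ⊤ ρ) (e : α ≃ β) :
    IsRotationSystem ⊤ (rotCongr e ρ) := by
  rw [isRotationSystem_top_iff] at h ⊢
  intro w
  have := permCongr_mem_rotationsAt (h (e.symm w)) e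
  rwa [e.apply_symm_apply] at this

@[simp] theorem rotCongr_refl (ρ : α → Perm α) : rotCongr (Equiv.refl α) ρ = ρ := rfl

theorem rotCongr_trans (e : α ≃ β) (e' : β ≃ δ) (ρ : α → Perm α) :
    rotCongr (e.trans e') ρ = rotCongr e' (rotCongr e ρ) := rfl

theorem rotCongr_rotAct (e : α ≃ β) (γ : Perm α) (ρ : α → Perm α) :
    rotCongr e (rotAct γ ρ) = rotAct (e.permCongr γ) (rotCongr e ρ) := by
  ext w x
  simp [rotCongr, rotAct, Equiv.permCongr_def]

end RotationsAt

section RootedOrbits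

variable {α β : Type*}

def rootedOrbit (v : α) (ρ : α → Perm α) : Set (α × (α → Perm α)) :=
  {p | ∃ γ : Perm α, (γ v, rotAct γ ρ) = p}

def rootedOrbits (α : Type*) : Set (Set (α × (α → Perm α))) :=
  {O | ∃ (v : α) (ρ : α → Perm α), IsRotationSystem ⊤ ρ ∧ O = rootedOrbit v ρ}

theorem rotAct_one_s8 (ρ : α → Perm α) : rotAct 1 ρ = ρ := rotCongr_refl ρ

theorem rotAct_mul_s8 (γ γ' : Perm α) (ρ : α → Perm α) :
    rotAct (γ * γ') ρ = rotAct γ (rotAct γ' ρ) := rotCongr_trans γ' γ ρ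

theorem rotAct_injective (γ : Perm α) : Function.Injective (rotAct γ) := fun ρ ρ' h => by
  simpa [← rotAct_mul_s8, rotAct_one_s8] using congrArg (rotAct γ⁻¹) h

theorem rootedOrbit_rotAct (v : α) (ρ : α → Perm α) (γ : Perm α) :
    rootedOrbit (γ v) (rotAct γ ρ) = rootedOrbit v ρ := by
  ext p
  refine ⟨fun ⟨δ, hδ⟩ => ⟨δ * γ, by rwa [rotAct_mul_s8]⟩, fun ⟨δ, hδ⟩ => ⟨δ * γ⁻¹, ?_⟩⟩
  simpa [← rotAct_mul_s8] using hδ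

theorem rootedOrbit_eq_iff {v v' : α} {ρ ρ' : α → Perm α} :
    rootedOrbit v ρ = rootedOrbit v' ρ' ↔ ∃ γ : Perm α, γ v = v' ∧ rotAct γ ρ = ρ' := by
  refine ⟨fun h => ?_, fun ⟨γ, hv, hρ⟩ => hv ▸ hρ ▸ (rootedOrbit_rotAct v ρ γ).symm⟩
  have : (v', ρ') ∈ rootedOrbit v' ρ' := ⟨1, by rw [rotAct_one_s8]; rfl⟩
  obtain ⟨γ, hγ⟩ := h ▸ this
  exact ⟨γ, congrArg Prod.fst hγ, congrArg Prod.snd hγ⟩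

theorem image_rootedOrbit (e : α ≃ β) (v : α) (ρ : α → Perm α) :
    Prod.map e (rotCongr e) '' rootedOrbit v ρ = rootedOrbit (e v) (rotCongr e ρ) := by
  ext p
  have hv (γ : Perm α) : e (γ v) = e.permCongr γ (e v) := by simp
  simp only [rootedOrbit, Set.mem_image, Set.mem_ofPred_eq, exists_exists_eq_and, Prod.map_apply,
    rotCongr_rotAct, hv]
  exact (e.permCongr.surjective.exists (p := fun γ => (γ (e v), rotAct γ (rotCongr e ρ)) = p)).symm

theorem ncard_rootedOrbits_congr (e : α ≃ β) :
    (rootedOrbits α).ncard = (rootedOrbits β).ncard := by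
  have hΦ : Function.Injective (Prod.map e (rotCongr e)) := by
    refine Function.Injective.prodMap e.injective fun ρ ρ' h => ?_
    simpa [← rotCongr_trans] using congrArg (rotCongr e.symm) h
  suffices (Set.image (Prod.map e (rotCongr e))) '' rootedOrbits α = rootedOrbits β by
    rw [← this, Set.ncard_image_of_injective _ (Set.image_injective.mpr hΦ)]
  ext O
  constructor
  · rintro ⟨_, ⟨v, ρ, hρ, rfl⟩, rfl⟩
    exact ⟨e v, rotCongr e ρ, hρ.rotCongr e, image_rootedOrbit e v ρ⟩
  · rintro ⟨w, σ, hσ, rfl⟩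
    refine ⟨_, ⟨e.symm w, rotCongr e.symm σ, hσ.rotCongr e.symm, rfl⟩, ?_⟩
    rw [image_rootedOrbit, ← rotCongr_trans]
    simp

end RootedOrbits

open Nat in
theorem card_equiv_apply_eq {α β : Type*} [Finite α] [DecidableEq α] [DecidableEq β] (e : α ≃ β)
    (a : α) (b : β) : Nat.card {g : α ≃ β // g a = b} = (Nat.card α - 1)! := by
  have : Finite β := .of_equiv α e
  have hα : Nat.card {x // x ≠ a} = Nat.card α - 1 := by
    rw [← Nat.card_congr (optionSubtypeNe a), Finite.card_option, Nat.add_sub_cancel]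
  have hβ : Nat.card {y // y ≠ b} = Nat.card α - 1 := by
    rw [Nat.card_congr e, ← Nat.card_congr (optionSubtypeNe b), Finite.card_option,
      Nat.add_sub_cancel]
  obtain ⟨e'⟩ : Nonempty ({y // y ≠ b} ≃ {x // x ≠ a}) := Finite.card_eq.mp (hβ.trans hα.symm)
  calc Nat.card {g : α ≃ β // g a = b}
      = Nat.card {h : Option {x // x ≠ a} ≃ β // h none = b} :=
        Nat.card_congr (Equiv.subtypeEquiv ((optionSubtypeNe a).equivCongr (.refl β)).symm
          (by simp))
    _ = Nat.card (Perm {x // x ≠ a}) :=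
        Nat.card_congr ((optionSubtype b).trans ((Equiv.refl _).equivCongr e'))
    _ = (Nat.card α - 1)! := by rw [Nat.card_perm, hα]

section LabelledCycles

variable {α : Type*} [DecidableEq α] {m : ℕ} {v : α}

def labelledCycle (g : ZMod m ≃ {x // x ≠ v}) : Perm α := (Equiv.addRight 1).extendDomain g

theorem labelledCycle_apply (g : ZMod m ≃ {x // x ≠ v}) (j : ZMod m) :
    labelledCycle g (g j) = g (j + 1) :=
  extendDomain_apply_image _ _ _

theorem labelledCycle_apply_self (g : ZMod m ≃ {x // x ≠ v}) : labelledCycle g v = v :=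
  extendDomain_apply_not_subtype _ _ (not_not.mpr rfl)

theorem labelledCycle_pow_apply (g : ZMod m ≃ {x // x ≠ v}) (j : ZMod m) (t : ℕ) :
    (labelledCycle g ^ t) (g j) = g (j + t) := by
  induction t with
  | zero => simp
  | succ t ih => rw [pow_succ', Perm.mul_apply, ih, labelledCycle_apply]; push_cast; ring_nf

variable [NeZero m]

theorem labelledCycle_mem_rotationsAt (g : ZMod m ≃ {x // x ≠ v}) :
    labelledCycle g ∈ rotationsAt v := by
  have hv := labelledCycle_apply_self g
  refine ⟨⟨(Set.bijOn_singleton.mpr hv).compl (Equiv.bijective _), fun x hx y hy => ?_⟩, hv⟩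
  obtain ⟨a, rfl⟩ : ∃ a, (g a : α) = x := ⟨g.symm ⟨x, hx⟩, by simp⟩
  obtain ⟨b, rfl⟩ : ∃ b, (g b : α) = y := ⟨g.symm ⟨y, hy⟩, by simp⟩
  exact ⟨(b - a).val, by rw [zpow_natCast, labelledCycle_pow_apply, ZMod.natCast_zmod_val,
    add_sub_cancel]⟩

theorem labelledCycle_injective_of_apply_zero (u : {x // x ≠ v}) :
    Function.Injective fun g : {g : ZMod m ≃ {x // x ≠ v} // g 0 = u} => labelledCycle g.1 := by
  have key (g : ZMod m ≃ {x // x ≠ v}) (j : ZMod m) :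
      (g j : α) = (labelledCycle g ^ j.val) (g 0) := by
    rw [labelledCycle_pow_apply, zero_add, ZMod.natCast_zmod_val]
  rintro ⟨g, hg⟩ ⟨g', hg'⟩ (h : labelledCycle g = labelledCycle g')
  have hgg' (j : ZMod m) : (g j : α) = g' j := by rw [key g j, key g' j, h, hg, hg']
  exact Subtype.ext (Equiv.ext fun j => Subtype.ext (hgg' j))

variable [Fintype α]

theorem exists_labelledCycle_eq (hcard : Fintype.card α = m + 1) {σ : Perm α}
    (hσ : σ ∈ rotationsAt v) (u : {x // x ≠ v}) :
    ∃ g : ZMod m ≃ {x // x ≠ v}, g 0 = u ∧ labelledCycle g = σ := by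
  have hσs : σ.IsCycleOn (({v}ᶜ : Finset α) : Set α) := by simpa using hσ.1
  have hpow (a b : ℕ) : (σ ^ a) u = (σ ^ b) u ↔ (a : ZMod m) = b := by
    rw [hσs.pow_apply_eq_pow_apply (by simpa using u.2), ZMod.natCast_eq_natCast_iff]
    simp [Finset.card_compl, hcard]
  let L : ZMod m → {x // x ≠ v} := fun j =>
    ⟨(σ ^ j.val) u, ((σ ^ j.val).injective.ne u.2).trans_eq
      (pow_apply_eq_self_of_apply_eq_self hσ.2 _)⟩
  have hL : Function.Bijective L := by
    refine (Fintype.bijective_iff_injective_and_card L).mpr ⟨fun i j h => ?_, ?_⟩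
    · simpa using (hpow _ _).1 (congrArg Subtype.val h)
    · simp [Fintype.card_subtype_compl, hcard]
  refine ⟨Equiv.ofBijective L hL, Subtype.ext (by simp [L]), Equiv.ext fun x => ?_⟩
  by_cases hx : x = v
  · rw [hx, labelledCycle_apply_self, hσ.2]
  obtain ⟨j, hj⟩ := hL.2 ⟨x, hx⟩
  rw [show x = L j by rw [hj]]
  refine (labelledCycle_apply (Equiv.ofBijective L hL) j).trans ?_
  show (σ ^ (j + 1).val) u = σ ((σ ^ j.val) u)
  rw [← Perm.mul_apply, ← pow_succ', hpow]
  simp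

open Nat in
theorem card_rotationsAt (hcard : Fintype.card α = m + 1) (v : α) :
    Nat.card (rotationsAt v) = (m - 1)! := by
  have : Nontrivial α := Fintype.one_lt_card_iff_nontrivial.mp (by have := NeZero.pos m; omega)
  obtain ⟨u, hu⟩ := exists_ne v
  have hbij : Function.Bijective fun g : {g : ZMod m ≃ {x // x ≠ v} // g 0 = ⟨u, hu⟩} =>
      (⟨labelledCycle g.1, labelledCycle_mem_rotationsAt g.1⟩ : rotationsAt v) := by
    refine ⟨fun g g' h => labelledCycle_injective_of_apply_zero _ (congrArg Subtype.val h),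
      fun ⟨σ, hσ⟩ => ?_⟩
    obtain ⟨g, hg, rfl⟩ := exists_labelledCycle_eq hcard hσ ⟨u, hu⟩
    exact ⟨⟨g, hg⟩, rfl⟩
  have hcard' : Fintype.card (ZMod m) = Fintype.card {x // x ≠ v} := by
    simp [Fintype.card_subtype_compl, hcard]
  rw [← Nat.card_congr (Equiv.ofBijective _ hbij),
    card_equiv_apply_eq (Fintype.equivOfCardEq hcard'), Nat.card_zmod]

end LabelledCycles

section Model

variable {m : ℕ}

def shift (k : ZMod m) : Perm (Option (ZMod m)) := optionCongr (Equiv.addRight k)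

@[simp] theorem shift_none (k : ZMod m) : shift k none = none := rfl

@[simp] theorem shift_some (k i : ZMod m) : shift k (some i) = some (i + k) := rfl

theorem shift_add (a b : ZMod m) : shift (a + b) = shift a * shift b := by
  ext (_ | i) <;> simp [add_comm a, add_assoc]

theorem shift_neg (k : ZMod m) : shift (-k) = (shift k)⁻¹ :=
  eq_inv_of_mul_eq_one_left <| by rw [← shift_add, neg_add_cancel]; ext (_ | i) <;> simp

theorem shift_natCast (t : ℕ) : shift (t : ZMod m) = shift 1 ^ t := by
  induction t with
  | zero => ext (_ | i) <;> simp
  | succ t ih => rw [Nat.cast_succ, shift_add, ih, pow_succ]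

theorem shift_one_eq_labelledCycle :
    shift (1 : ZMod m) = labelledCycle (optionSubtype none ⟨.refl _, rfl⟩) := by
  ext (_ | i) : 1
  · exact (labelledCycle_apply_self _).symm
  · exact (labelledCycle_apply (optionSubtype none ⟨.refl _, rfl⟩) i).symm

def modelRot (f : ZMod m → rotationsAt (some 0 : Option (ZMod m))) :
    Option (ZMod m) → Perm (Option (ZMod m))
  | none => shift 1
  | some i => (shift i).permCongr (f i)

theorem modelRot_injective : Function.Injective (modelRot (m := m)) := fun _ _ h =>
  funext fun i => Subtype.ext ((shift i).permCongr.injective (congrFun h (some i)))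

theorem rotAct_shift_modelRot (k : ZMod m) (f : ZMod m → rotationsAt (some 0 : Option (ZMod m))) :
    rotAct (shift k) (modelRot (DomAddAct.mk k +ᵥ f)) = modelRot f := by
  ext (_ | i) : 1
  · simp only [rotAct, ← shift_neg, shift_none, modelRot, ← shift_add]
    congr 1
    ring
  · simp only [rotAct, ← shift_neg, shift_some, modelRot, permCongr_eq_mul, DomAddAct.vadd_apply,
      Equiv.symm_apply_apply, vadd_eq_add, ← mul_assoc, ← shift_add]
    rw [mul_assoc, ← shift_add]
    congr 3 <;> ring_nf

theorem exists_modelRot_eq {ρ : Option (ZMod m) → Perm (Option (ZMod m))}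
    (hρ : IsRotationSystem ⊤ ρ) (h : ρ none = shift 1) : ∃ f, modelRot f = ρ := by
  rw [isRotationSystem_top_iff] at hρ
  refine ⟨fun i => ⟨(shift (-i)).permCongr (ρ (some i)), ?_⟩, funext ?_⟩
  · simpa using permCongr_mem_rotationsAt (hρ (some i)) (shift (-i))
  rintro (_ | i)
  · exact h.symm
  · simp [modelRot, shift_neg, mul_assoc]

variable [NeZero m]

theorem exists_permCongr_shift_eq {α : Type*} [Fintype α] [DecidableEq α]
    (hcard : Fintype.card α = m + 1) {v : α} {σ : Perm α} (hσ : σ ∈ rotationsAt v) :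
    ∃ γ : Option (ZMod m) ≃ α, γ none = v ∧ γ.permCongr (shift 1) = σ := by
  have : Nontrivial α := Fintype.one_lt_card_iff_nontrivial.mp (by have := NeZero.pos m; omega)
  obtain ⟨u, hu⟩ := exists_ne v
  obtain ⟨g, -, hg⟩ := exists_labelledCycle_eq hcard hσ ⟨u, hu⟩
  let γ := (optionSubtype v).symm g
  refine ⟨γ.1, γ.2, Equiv.ext fun x => ?_⟩
  obtain ⟨_ | j, rfl⟩ := γ.1.surjective x
  · rw [permCongr_apply, symm_apply_apply, shift_none, γ.2, hσ.2]
  · simp [γ, ← hg, labelledCycle_apply]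

theorem shift_one_mem_rotationsAt : shift (1 : ZMod m) ∈ rotationsAt none := by
  rw [shift_one_eq_labelledCycle]
  exact labelledCycle_mem_rotationsAt _

theorem isRotationSystem_modelRot (f : ZMod m → rotationsAt (some 0 : Option (ZMod m))) :
    IsRotationSystem ⊤ (modelRot f) := by
  rw [isRotationSystem_top_iff]
  rintro (_ | i)
  · exact shift_one_mem_rotationsAt
  · simpa [modelRot] using permCongr_mem_rotationsAt (f i).2 (shift i)

theorem eq_shift_of_commute {γ : Perm (Option (ZMod m))} (h0 : γ none = none)
    (h : Commute γ (shift 1)) : ∃ k, γ = shift k := by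
  obtain ⟨k, hk⟩ : ∃ k, γ (some 0) = some k :=
    Option.ne_none_iff_exists'.mp fun h' => Option.some_ne_none 0 (γ.injective (h'.trans h0.symm))
  refine ⟨k, Equiv.ext fun x => ?_⟩
  obtain _ | i := x
  · exact h0
  have hi : Commute γ (shift i) := by simpa [← shift_natCast] using h.pow_right i.val
  calc γ (some i) = γ (shift i (some 0)) := by simp
    _ = shift i (some k) := by rw [← Perm.mul_apply, hi.eq, Perm.mul_apply, hk]
    _ = shift k (some i) := by simp [add_comm]

theorem rootedOrbit_modelRot_eq_iff {f f' : ZMod m → rotationsAt (some 0 : Option (ZMod m))} :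
    rootedOrbit none (modelRot f) = rootedOrbit none (modelRot f') ↔
      AddAction.orbitRel (ZMod m)ᵈᵃᵃ _ f f' := by
  rw [rootedOrbit_eq_iff, AddAction.orbitRel_apply, AddAction.mem_orbit_iff,
    DomAddAct.mk.surjective.exists]
  constructor
  · rintro ⟨γ, hγ0, hγ⟩
    have hc : Commute γ (shift 1) := by
      have h := congrFun hγ none
      have hγ0' : γ⁻¹ none = none := by rw [Perm.inv_eq_iff_eq, hγ0]
      simp only [rotAct, hγ0', modelRot] at h
      exact mul_inv_eq_iff_eq_mul.mp h
    obtain ⟨k, rfl⟩ := eq_shift_of_commute hγ0 hc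
    exact ⟨k, modelRot_injective <| rotAct_injective (shift k) <|
      (rotAct_shift_modelRot k f').trans hγ.symm⟩
  · rintro ⟨k, rfl⟩
    exact ⟨shift k, rfl, rotAct_shift_modelRot k f'⟩

theorem rootedOrbits_eq_range_modelRot :
    rootedOrbits (Option (ZMod m)) = Set.range fun f => rootedOrbit none (modelRot f) := by
  ext O
  constructor
  · rintro ⟨v, ρ, hρ, rfl⟩
    obtain ⟨γ, hγ, hγρ⟩ :=
      exists_permCongr_shift_eq (m := m) (by simp) (isRotationSystem_top_iff.mp hρ v)
    have hroot : rotAct γ⁻¹ ρ none = shift 1 := by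
      simp [rotAct, hγ, ← hγρ, permCongr_eq_mul, mul_assoc]
    obtain ⟨f, hf⟩ := exists_modelRot_eq (hρ.rotCongr γ⁻¹) hroot
    refine ⟨f, ?_⟩
    change rootedOrbit none (modelRot f) = _
    have hv : γ⁻¹ v = none := by simp [← hγ]
    rw [hf, ← rotAct_eq_rotCongr, ← rootedOrbit_rotAct v ρ γ⁻¹, hv]
  · rintro ⟨f, rfl⟩
    exact ⟨none, modelRot f, isRotationSystem_modelRot f, rfl⟩

end Model

section ShiftAction

open AddAction

theorem ncard_range_eq_card_orbitRel_quotient {G X Z : Type*} [AddGroup G] [AddAction G X]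
    (F : X → Z) (hF : ∀ x y, F x = F y ↔ orbitRel G X x y) :
    (Set.range F).ncard = Nat.card (orbitRel.Quotient G X) := by
  have : orbitRel G X = Setoid.ker F := Setoid.ext fun x y => (hF x y).symm
  rw [← Nat.card_coe_set_eq, orbitRel.Quotient, this]
  exact Nat.card_congr (Setoid.quotientKerEquivRange F).symm

variable {m : ℕ} {A : Type*}

def fixedByShiftEquiv (k : ZMod m) :
    fixedBy (ZMod m → A) (DomAddAct.mk k) ≃ (ZMod m ⧸ AddSubgroup.zmultiples k → A) where
  toFun f := Quotient.lift f.1 fun i j hij => by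
    obtain ⟨n, hn⟩ := AddSubgroup.mem_zmultiples_iff.mp (QuotientAddGroup.leftRel_apply.mp hij)
    have hf : DomAddAct.mk (n • k) ∈ stabilizer _ f.1 := by
      rw [DomAddAct.mk_zsmul]
      exact zsmul_mem (mem_stabilizer_iff.mpr f.2) n
    rw [← congrFun (mem_stabilizer_iff.mp hf) i, DomAddAct.vadd_apply, symm_apply_apply,
      vadd_eq_add, hn, neg_add_cancel_comm]
  invFun F := ⟨fun i => F i, funext fun i => by
    simp only [DomAddAct.vadd_apply, symm_apply_apply, vadd_eq_add]
    exact congrArg F (QuotientAddGroup.eq.mpr ⟨-1, by simp⟩)⟩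
  left_inv _ := rfl
  right_inv F := funext fun q => Quotient.inductionOn' q fun _ => rfl

variable [NeZero m]

theorem card_quotient_zmultiples (k : ZMod m) :
    Nat.card (ZMod m ⧸ AddSubgroup.zmultiples k) = m.gcd k.val := by
  have h := (AddSubgroup.zmultiples k).index_mul_card
  have hord : addOrderOf k = m / m.gcd k.val := by
    simpa using ZMod.addOrderOf_coe k.val (NeZero.ne m)
  rw [Nat.card_zmultiples, hord, Nat.card_zmod] at h
  have hg : m.gcd k.val * (m / m.gcd k.val) = m := Nat.mul_div_cancel' (Nat.gcd_dvd_left _ _)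
  exact Nat.eq_of_mul_eq_mul_right (Nat.div_pos (Nat.gcd_le_left _ (NeZero.pos m))
    (Nat.gcd_pos_of_pos_left _ (NeZero.pos m))) (h.trans hg.symm)

theorem card_orbitRel_quotient_shift_mul [Finite A] :
    Nat.card (orbitRel.Quotient (ZMod m)ᵈᵃᵃ (ZMod m → A)) * m =
      ∑ k : ZMod m, Nat.card A ^ m.gcd k.val := by
  let _ : Fintype (ZMod m)ᵈᵃᵃ := Fintype.ofEquiv _ DomAddAct.mk
  have burnside := Nat.card_congr (sigmaFixedByEquivOrbitsProdAddGroup (ZMod m)ᵈᵃᵃ (ZMod m → A))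
  rw [Nat.card_sigma, Nat.card_prod, Nat.card_congr DomAddAct.mk.symm, Nat.card_zmod,
    ← DomAddAct.mk.sum_comp] at burnside
  simp only [Nat.card_congr (fixedByShiftEquiv _), Nat.card_fun, card_quotient_zmultiples]
    at burnside
  exact burnside.symm

open Nat in
theorem sum_pow_gcd_eq_sum_divisors (c : ℕ) :
    ∑ k : ZMod m, c ^ m.gcd k.val = ∑ d ∈ m.divisors, φ d * c ^ (m / d) := by
  have hdvd {d} (hd : d ∈ m.divisors) : d ∣ m := Nat.dvd_of_mem_divisors hd
  calc ∑ k : ZMod m, c ^ m.gcd k.val = ∑ j ∈ Finset.range m, c ^ m.gcd j :=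
        Finset.sum_nbij ZMod.val (by simp [ZMod.val_lt]) (ZMod.val_injective m).injOn
          (fun j hj => ⟨j, by simp, ZMod.val_cast_of_lt (Finset.mem_range.mp hj)⟩) fun _ _ => rfl
    _ = ∑ d ∈ m.divisors, ∑ j ∈ Finset.range m with m.gcd j = d, c ^ m.gcd j :=
        (Finset.sum_fiberwise_of_maps_to (fun j _ => Nat.mem_divisors.mpr
          ⟨Nat.gcd_dvd_left _ _, NeZero.ne m⟩) _).symm
    _ = ∑ d ∈ m.divisors, φ (m / d) * c ^ d := Finset.sum_congr rfl fun d hd => by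
        rw [Finset.sum_congr rfl fun j hj => by rw [(Finset.mem_filter.mp hj).2], Finset.sum_const,
          smul_eq_mul, Nat.totient_div_of_dvd (hdvd hd)]
    _ = ∑ d ∈ m.divisors, φ d * c ^ (m / d) := by
        rw [← Nat.sum_div_divisors]
        exact Finset.sum_congr rfl fun d hd => by rw [Nat.div_div_self (hdvd hd) (NeZero.ne m)]

end ShiftAction

open Nat in
theorem ncard_rootedOrbits_mul {α : Type*} [Fintype α] {m : ℕ} [NeZero m]
    (hcard : Fintype.card α = m + 1) :
    (rootedOrbits α).ncard * m = ∑ d ∈ m.divisors, φ d * (m - 1)! ^ (m / d) := by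
  let e : Option (ZMod m) ≃ α := Fintype.equivOfCardEq (by simp [hcard])
  rw [← ncard_rootedOrbits_congr e, rootedOrbits_eq_range_modelRot,
    ncard_range_eq_card_orbitRel_quotient _ fun _ _ => rootedOrbit_modelRot_eq_iff,
    card_orbitRel_quotient_shift_mul, card_rotationsAt (m := m) (by simp),
    sum_pow_gcd_eq_sum_divisors]

theorem card_vertex_rooted_imbeddings_complete_general {V : Type*} [Fintype V]
    (n : ℕ) (hn : 3 ≤ n) (hcard : Fintype.card V = n) :
    (({O : Set (V × (V → Equiv.Perm V)) | ∃ (v : V) (ρ : V → Equiv.Perm V),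
        IsRotationSystem (⊤ : SimpleGraph V) ρ ∧
        O = {p | ∃ γ : Equiv.Perm V, (γ v, rotAct γ ρ) = p}}).ncard : ℚ)
      = (1 / ((n : ℚ) - 1)) *
          ∑ d ∈ (n - 1).divisors,
            (Nat.totient d : ℚ) * ((Nat.factorial (n - 2) : ℚ)) ^ ((n - 1) / d) := by
  obtain ⟨m, rfl⟩ : ∃ m, n = m + 1 := ⟨n - 1, by omega⟩
  have : NeZero m := ⟨by omega⟩
  have key := ncard_rootedOrbits_mul hcard
  have hm : (m : ℚ) ≠ 0 := by exact_mod_cast NeZero.ne m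
  rw [show m + 1 - 2 = m - 1 by omega, Nat.add_sub_cancel, Nat.cast_add, Nat.cast_one,
    add_sub_cancel_right, one_div, inv_mul_eq_div, eq_div_iff hm]
  exact_mod_cast key

/-- Theorem (vertex-rooted imbeddings of the complete graph): for `n ≥ 3`, the number of orbits
of the diagonal action of `S_n` on pairs `(v, ρ)`, where `v` is a vertex and `ρ` a rotation
system of `K_n`, equals `(1/(n−1)) · Σ_{d ∣ n−1} φ(d) · ((n−2)!)^{(n−1)/d}`. -/
theorem card_vertex_rooted_imbeddings_complete {V : Type*} [Fintype V] [DecidableEq V]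
    (n : ℕ) (hn : 3 ≤ n) (hcard : Fintype.card V = n) :
    (({O : Set (V × (V → Equiv.Perm V)) | ∃ (v : V) (ρ : V → Equiv.Perm V),
        IsRotationSystem (⊤ : SimpleGraph V) ρ ∧
        O = {p | ∃ γ : Equiv.Perm V, (γ v, rotAct γ ρ) = p}}).ncard : ℚ)
      = (1 / ((n : ℚ) - 1)) *
          ∑ d ∈ (n - 1).divisors,
            (Nat.totient d : ℚ) * ((Nat.factorial (n - 2) : ℚ)) ^ ((n - 1) / d) :=
  card_vertex_rooted_imbeddings_complete_general n hn hcard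
end

section
/- Let G be a finite connected simple graph, let ρ be a rotation system for G, and let γ ∈ Γ_ρ(G) be a map automorphism (a graph automorphism with γ·ρ = ρ). If there exist adjacent vertices u and v with γ(u) = u and γ(v) = v, then γ is the identity automorphism. -/
/-!
A map automorphism `γ` fixing a vertex `a` commutes with the rotation `ρ a`, which acts
transitively on the neighbours of `a`; so if `γ` also fixes one neighbour of `a`, it fixes all of
them. Hence the set of fixed vertices having a fixed neighbour is closed under adjacency, and by
connectedness it is everything.
-/

theorem Equiv.Perm.IsCycleOn.apply_eq_self_of_commute {α : Type*} {σ γ : Equiv.Perm α}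
    {s : Set α} (hσ : σ.IsCycleOn s) (hcomm : Commute γ σ) {b c : α} (hb : b ∈ s) (hc : c ∈ s)
    (hγb : γ b = b) : γ c = c := by
  obtain ⟨n, rfl⟩ := hσ.2 hb hc
  rw [← Equiv.Perm.mul_apply, (hcomm.zpow_right n).eq, Equiv.Perm.mul_apply, hγb]

theorem SimpleGraph.Reachable.mem_of_forall_adj_mem {V : Type*} {G : SimpleGraph V}
    {s : Set V} (hs : ∀ ⦃a b : V⦄, G.Adj a b → a ∈ s → b ∈ s) {u x : V}
    (h : G.Reachable u x) (hu : u ∈ s) : x ∈ s := by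
  rw [SimpleGraph.reachable_iff_reflTransGen] at h
  induction h with
  | refl => exact hu
  | tail _ hab ih => exact hs hab ih

theorem commute_of_rotAct_eq_self {V : Type*} {γ : Equiv.Perm V} {ρ : V → Equiv.Perm V}
    (hfix : rotAct γ ρ = ρ) {a : V} (ha : γ a = a) : Commute γ (ρ a) := by
  have h := congrFun hfix a
  rw [rotAct, Equiv.Perm.inv_eq_iff_eq.2 ha.symm, mul_inv_eq_iff_eq_mul] at h
  exact h

theorem apply_eq_self_of_adj_of_rotAct_eq_self {V : Type*} {G : SimpleGraph V}
    {ρ : V → Equiv.Perm V} (hρ : IsRotationSystem G ρ) {γ : Equiv.Perm V}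
    (hfix : rotAct γ ρ = ρ) {a b c : V} (hab : G.Adj a b) (hac : G.Adj a c) (ha : γ a = a)
    (hb : γ b = b) : γ c = c :=
  (hρ a).1.apply_eq_self_of_commute (commute_of_rotAct_eq_self hfix ha) hab hac hb

theorem map_automorphism_fixing_adjacent_eq_one_general {V : Type*}
    (G : SimpleGraph V) (hG : G.Connected)
    (ρ : V → Equiv.Perm V) (hρ : IsRotationSystem G ρ)
    (γ : Equiv.Perm V) (hfix : rotAct γ ρ = ρ)
    (u v : V) (huv : G.Adj u v) (hu : γ u = u) (hv : γ v = v) :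
    γ = 1 := by
  let s : Set V := {a | γ a = a ∧ ∃ b, G.Adj a b ∧ γ b = b}
  have hs : ∀ ⦃a c : V⦄, G.Adj a c → a ∈ s → c ∈ s := by
    rintro a c hac ⟨ha, b, hab, hb⟩
    exact ⟨apply_eq_self_of_adj_of_rotAct_eq_self hρ hfix hab hac ha hb, a, hac.symm, ha⟩
  ext x
  exact ((hG.preconnected u x).mem_of_forall_adj_mem hs ⟨hu, v, huv, hv⟩).1

/-- Theorem: a map automorphism of a connected graph which fixes two adjacent vertices is the
identity. -/
theorem map_automorphism_fixing_adjacent_eq_one {V : Type*} [Fintype V] [DecidableEq V]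
    (G : SimpleGraph V) (hG : G.Connected)
    (ρ : V → Equiv.Perm V) (hρ : IsRotationSystem G ρ)
    (γ : Equiv.Perm V) (hγ : γ ∈ autSet G) (hfix : rotAct γ ρ = ρ)
    (u v : V) (huv : G.Adj u v) (hu : γ u = u) (hv : γ v = v) :
    γ = 1 :=
  map_automorphism_fixing_adjacent_eq_one_general G hG ρ hρ γ hfix u v huv hu hv
end

section
/- Let n be a positive integer and let f, i : ℕ → ℚ be functions such that for every divisor d of n, f(d) = Σ_{k : d ∣ k and k ∣ n} i(k) · φ(d)/k. Then for every divisor d of n, i(d) = d · Σ_{k : d ∣ k and k ∣ n} μ(k/d) · f(k)/φ(k), where μ is the Möbius function and φ is Euler's totient function; in particular the values i(d) on the divisors of n are uniquely determined by the values f(d). -/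
lemma aux_moebius_sum (N : ℕ) :
    ∑ j ∈ N.divisors, (ArithmeticFunction.moebius j : ℤ) = if N = 1 then 1 else 0 := by
  have h2 : (ArithmeticFunction.moebius * ArithmeticFunction.zeta : ArithmeticFunction ℤ) N
      = (1 : ArithmeticFunction ℤ) N := by rw [ArithmeticFunction.moebius_mul_coe_zeta]
  rwa [ArithmeticFunction.coe_mul_zeta_apply, ArithmeticFunction.one_apply] at h2

lemma aux_moebius_sum_above (d m : ℕ) (hm : 0 < m) (hdm : d ∣ m) (hd : 0 < d) :
    ∑ k ∈ m.divisors.filter (d ∣ ·), ((ArithmeticFunction.moebius (k / d) : ℤ) : ℚ)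
      = if m = d then 1 else 0 := by
  have key : ∑ k ∈ m.divisors.filter (d ∣ ·), ((ArithmeticFunction.moebius (k / d) : ℤ) : ℚ)
      = ∑ j ∈ (m / d).divisors, ((ArithmeticFunction.moebius j : ℤ) : ℚ) := by
    apply Finset.sum_nbij' (fun k => k / d) (fun j => d * j)
    · intro k hk
      simp only [Finset.mem_filter, Nat.mem_divisors] at hk
      obtain ⟨⟨hkm, _⟩, j, rfl⟩ := hk
      rw [Nat.mul_div_cancel_left j hd, Nat.mem_divisors]
      exact ⟨(Nat.dvd_div_iff_mul_dvd hdm).mpr hkm,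
        (Nat.div_pos (Nat.le_of_dvd hm hdm) hd).ne'⟩
    · intro j hj
      rw [Nat.mem_divisors] at hj
      simp only [Finset.mem_filter, Nat.mem_divisors]
      exact ⟨⟨(Nat.dvd_div_iff_mul_dvd hdm).mp hj.1, hm.ne'⟩, Dvd.intro j rfl⟩
    · intro k hk
      simp only [Finset.mem_filter] at hk
      exact Nat.mul_div_cancel' hk.2
    · intro j _
      exact Nat.mul_div_cancel_left j hd
    · intro k _; rfl
  rw [key]
  have h1 := aux_moebius_sum (m / d)
  have h2 : m / d = 1 ↔ m = d := by
    constructor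
    · intro h1'
      have := Nat.div_mul_cancel hdm
      rw [h1', one_mul] at this; omega
    · intro h1'; subst h1'; exact Nat.div_self hd
  have : (∑ j ∈ (m / d).divisors, ((ArithmeticFunction.moebius j : ℤ) : ℚ))
      = ((∑ j ∈ (m / d).divisors, (ArithmeticFunction.moebius j : ℤ) : ℤ) : ℚ) := by
    push_cast; rfl
  rw [this, h1]
  by_cases hmd : m = d <;> simp [hmd, h2, Nat.div_self hd]

/-- Theorem (Möbius inversion for the cyclic decomposition): if for every divisor `d` of `n`
one has `f(d) = Σ_{d ∣ k ∣ n} i(k) · φ(d)/k`, then for every divisor `d` of `n`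
`i(d) = d · Σ_{d ∣ k ∣ n} μ(k/d) · f(k)/φ(k)`; in particular the values `i(d)` on the divisors
of `n` are uniquely determined by the values `f(d)`. -/
theorem moebius_inversion_symmetry_count (n : ℕ) (hn : 0 < n) (f i : ℕ → ℚ)
    (h : ∀ d ∈ n.divisors,
      f d = ∑ k ∈ n.divisors.filter (d ∣ ·), i k * (Nat.totient d : ℚ) / (k : ℚ)) :
    ∀ d ∈ n.divisors,
      i d = (d : ℚ) * ∑ k ∈ n.divisors.filter (d ∣ ·),
        ((ArithmeticFunction.moebius (k / d) : ℤ) : ℚ) * f k / (Nat.totient k : ℚ) := by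
  intro d hd
  have hdn : d ∣ n := (Nat.mem_divisors.mp hd).1
  have hdpos : 0 < d := Nat.pos_of_mem_divisors hd
  -- Step 1: rewrite each term using the hypothesis
  have step1 : ∀ k ∈ n.divisors.filter (d ∣ ·),
      ((ArithmeticFunction.moebius (k / d) : ℤ) : ℚ) * f k / (Nat.totient k : ℚ)
        = ∑ m ∈ n.divisors.filter (k ∣ ·),
            ((ArithmeticFunction.moebius (k / d) : ℤ) : ℚ) * (i m / (m : ℚ)) := by
    intro k hk
    simp only [Finset.mem_filter] at hk
    have hkpos : 0 < k := Nat.pos_of_mem_divisors hk.1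
    have htk : (Nat.totient k : ℚ) ≠ 0 := by
      exact_mod_cast (Nat.totient_pos.mpr hkpos).ne'
    rw [h k hk.1, Finset.mul_sum, Finset.sum_div]
    refine Finset.sum_congr rfl fun m hm => ?_
    have hmpos : 0 < m := Nat.pos_of_mem_divisors (Finset.mem_filter.mp hm).1
    have hm0 : (m : ℚ) ≠ 0 := by exact_mod_cast hmpos.ne'
    field_simp
  rw [Finset.sum_congr rfl step1]
  -- Step 2: swap the sums
  rw [Finset.sum_comm' (t' := n.divisors.filter (d ∣ ·))
    (s' := fun m => m.divisors.filter (d ∣ ·)) (by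
      intro k m
      simp only [Finset.mem_filter, Nat.mem_divisors]
      constructor
      · rintro ⟨⟨⟨-, hn0⟩, hdk⟩, ⟨hmn, -⟩, hkm⟩
        have hm0 : m ≠ 0 := fun h0 => hn0 (by subst h0; simpa using hmn)
        exact ⟨⟨⟨hkm, hm0⟩, hdk⟩, ⟨hmn, hn0⟩, hdk.trans hkm⟩
      · rintro ⟨⟨⟨hkm, hm0⟩, hdk⟩, ⟨hmn, hn0⟩, -⟩
        exact ⟨⟨⟨hkm.trans hmn, hn0⟩, hdk⟩, ⟨hmn, hn0⟩, hkm⟩)]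
  -- Step 3: evaluate the inner sums
  have step3 : ∀ m ∈ n.divisors.filter (d ∣ ·),
      (∑ k ∈ m.divisors.filter (d ∣ ·),
        ((ArithmeticFunction.moebius (k / d) : ℤ) : ℚ) * (i m / (m : ℚ)))
      = (if m = d then 1 else 0) * (i m / (m : ℚ)) := by
    intro m hm
    simp only [Finset.mem_filter, Nat.mem_divisors] at hm
    rw [← Finset.sum_mul, aux_moebius_sum_above d m
      (Nat.pos_of_ne_zero fun h0 => hm.1.2 (by simpa [h0] using (h0 ▸ hm.1.1 : (0:ℕ) ∣ n)))
      hm.2 hdpos]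
  have hmem : d ∈ n.divisors.filter (d ∣ ·) := by
    simp [Nat.mem_divisors, hdn, hn.ne']
  rw [Finset.sum_congr rfl step3]
  simp only [ite_mul, one_mul, zero_mul]
  rw [Finset.sum_ite_eq' _ d (fun x => i x / (x : ℚ)), if_pos hmem]
  have hd0 : (d : ℚ) ≠ 0 := by exact_mod_cast hdpos.ne'
  field_simp
end
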